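/- arXiv:1901.03512 — 6 statements merged into one kernel-verified Lean document; each statement's English description precedes it below -/
import Mathlib

section
/- Let p, q, s, t be integers with p ≠ q. Then the system 2p + s = 2q + t and 2p² + s² = 2q² + t² holds if and only if there exists a nonzero integer n such that q = p + 2n, s = p + 3n, and t = p − n. -/
/-!
Eliminating `t` through the linear equation turns the quadratic one into
`2 (q - p) (p + 2 s - 3 q) = 0`, so for `p ≠ q` the system says `2 s = 3 q - p` and
`2 t = 3 p - q`; these are solved by `n = s - q`.
-/

section Resonance

variable {R : Type*} [CommRing R] [NoZeroDivisors R] [CharZero R] {p q s t : R}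

theorem resonant_iff_two_mul (hpq : p ≠ q) :
    (2 * p + s = 2 * q + t ∧ 2 * p ^ 2 + s ^ 2 = 2 * q ^ 2 + t ^ 2) ↔
      2 * s = 3 * q - p ∧ 2 * t = 3 * p - q := by
  constructor
  · rintro ⟨hlin, hquad⟩
    have hfactor : 2 * ((q - p) * (p + 2 * s - 3 * q)) = 0 := by
      linear_combination hquad - (2 * p + s - 2 * q + t) * hlin
    have hs : p + 2 * s - 3 * q = 0 :=
      ((mul_eq_zero.mp ((mul_eq_zero.mp hfactor).resolve_left two_ne_zero)).resolve_left
        (sub_ne_zero.mpr hpq.symm))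
    exact ⟨by linear_combination hs, by linear_combination hs - 2 * hlin⟩
  · rintro ⟨hs, ht⟩
    refine ⟨mul_left_cancel₀ (two_ne_zero (α := R)) ?_,
      mul_left_cancel₀ (by norm_num : (4 : R) ≠ 0) ?_⟩
    · linear_combination hs - ht
    · linear_combination (2 * s + 3 * q - p) * hs - (2 * t + 3 * p - q) * ht

theorem two_mul_eq_iff_exists :
    (2 * s = 3 * q - p ∧ 2 * t = 3 * p - q) ↔
      ∃ n : R, q = p + 2 * n ∧ s = p + 3 * n ∧ t = p - n := by
  constructor
  · rintro ⟨hs, ht⟩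
    refine ⟨s - q, by linear_combination -hs, by linear_combination -hs,
      mul_left_cancel₀ (two_ne_zero (α := R)) ?_⟩
    linear_combination ht + hs
  · rintro ⟨n, rfl, rfl, rfl⟩
    constructor <;> ring

end Resonance

theorem stmt_3 (p q s t : ℤ) (hpq : p ≠ q) :
    (2 * p + s = 2 * q + t ∧ 2 * p ^ 2 + s ^ 2 = 2 * q ^ 2 + t ^ 2) ↔
      ∃ n : ℤ, n ≠ 0 ∧ q = p + 2 * n ∧ s = p + 3 * n ∧ t = p - n := by
  rw [resonant_iff_two_mul hpq, two_mul_eq_iff_exists]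
  constructor
  · rintro ⟨n, hq, hs, ht⟩
    exact ⟨n, fun hn => hpq (by simp [hq, hn]), hq, hs, ht⟩
  · rintro ⟨n, -, hn⟩
    exact ⟨n, hn⟩
end

section
/- For all j₁, j₂, j₃ ∈ {−3, 10, −6} and every integer ℓ, if 2j₁ + j₂ = 2j₃ + ℓ and 2j₁² + j₂² = 2j₃² + ℓ², then ℓ ∈ {−3, 10, −6}. -/
/-!
Substituting `l = 2a + b - 2c` from the momentum relation into the energy relation leaves
`(a - c)(a + 2b - 3c) = 0`. If `a = c` then `l = b` is an excited mode. Otherwise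
`a + 2b = 3c` forces `a ≡ b (mod 3)`, and among `{-3, 10, -6}` this only happens in the
degenerate cases `a = b = c`.
-/

theorem resonance_factorization {R : Type*} [CommRing R] [NoZeroDivisors R] [CharZero R]
    {a b c l : R} (e1 : 2 * a + b = 2 * c + l) (e2 : 2 * a ^ 2 + b ^ 2 = 2 * c ^ 2 + l ^ 2) :
    (a - c) * (a + 2 * b - 3 * c) = 0 := by
  obtain rfl : l = 2 * a + b - 2 * c := by rw [e1]; ring
  have h : (2 : R) * ((a - c) * (a + 2 * b - 3 * c)) = 0 := by linear_combination -e2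
  exact (mul_eq_zero.mp h).resolve_left two_ne_zero

theorem eq_of_add_two_mul_eq_three_mul_of_mem {a b c : ℤ}
    (ha : a ∈ ({-3, 10, -6} : Set ℤ)) (hb : b ∈ ({-3, 10, -6} : Set ℤ))
    (hc : c ∈ ({-3, 10, -6} : Set ℤ)) (h : a + 2 * b = 3 * c) : a = c := by
  simp only [Set.mem_insert_iff, Set.mem_singleton_iff] at ha hb hc
  rcases ha with rfl | rfl | rfl <;> rcases hb with rfl | rfl | rfl <;>
    rcases hc with rfl | rfl | rfl <;> omega

theorem stmt_7 (j1 j2 j3 : ℤ)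
    (h1 : j1 ∈ ({-3, 10, -6} : Set ℤ)) (h2 : j2 ∈ ({-3, 10, -6} : Set ℤ))
    (h3 : j3 ∈ ({-3, 10, -6} : Set ℤ)) (l : ℤ)
    (e1 : 2 * j1 + j2 = 2 * j3 + l)
    (e2 : 2 * j1 ^ 2 + j2 ^ 2 = 2 * j3 ^ 2 + l ^ 2) :
    l ∈ ({-3, 10, -6} : Set ℤ) := by
  have hj : j1 = j3 := by
    rcases mul_eq_zero.mp (resonance_factorization e1 e2) with h | h
    · exact sub_eq_zero.mp h
    · exact eq_of_add_two_mul_eq_three_mul_of_mem h1 h2 h3 (by linarith)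
  obtain rfl : l = j2 := by rw [hj] at e1; linarith
  exact h2
end

section
/- Let j₅, j₆, j₇ ∈ {−3, 10, −6} and let s, t be integers with s ≠ t and s, t ∉ {−3, 10, −6}. If 2j₅ + j₆ = j₇ + s + t and 2j₅² + j₆² = j₇² + s² + t², then (j₅, j₆, j₇) = (−3, 10, −6) and {s, t} = {1, 9}. -/
/-!
Writing `S = s + t` and `Q = s² + t²`, the resonance fixes `S` and `Q` in terms of the excited
modes, hence also `(s - t)² = 2Q - S²`. If `j₇ = j₅` or `j₇ = j₆`, then `{s, t}` has the same sum
and sum of squares as `{j₅, j₆}` or `{j₅, j₅}`, so `s` is an excited mode. Among the twelve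
remaining triples, `2Q - S²` is a perfect square only for `(-3, 10, -6)`, where it is `8²` and
`S = 10`.
-/

theorem eq_or_eq_of_add_eq_of_sq_add_sq_eq {R : Type*} [CommRing R] [IsDomain R]
    [NeZero (2 : R)] {a b s t : R} (h₁ : s + t = a + b) (h₂ : s ^ 2 + t ^ 2 = a ^ 2 + b ^ 2) :
    s = a ∨ s = b := by
  have h : 2 * ((s - a) * (s - b)) = 0 := by
    linear_combination h₂ - (t - s + a + b) * h₁
  rcases mul_eq_zero.mp ((mul_eq_zero.mp h).resolve_left two_ne_zero) with h | h
  · exact .inl (sub_eq_zero.mp h)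
  · exact .inr (sub_eq_zero.mp h)

theorem excited_triple_eq_of_sq_eq {j5 j6 j7 d : ℤ}
    (h5 : j5 = -3 ∨ j5 = 10 ∨ j5 = -6) (h6 : j6 = -3 ∨ j6 = 10 ∨ j6 = -6)
    (h7 : j7 = -3 ∨ j7 = 10 ∨ j7 = -6) (h75 : j7 ≠ j5) (h76 : j7 ≠ j6)
    (hd : d ^ 2 = 2 * (2 * j5 ^ 2 + j6 ^ 2 - j7 ^ 2) - (2 * j5 + j6 - j7) ^ 2) :
    j5 = -3 ∧ j6 = 10 ∧ j7 = -6 := by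
  rcases h5 with rfl | rfl | rfl <;> rcases h6 with rfl | rfl | rfl <;>
    rcases h7 with rfl | rfl | rfl <;>
    first
    | exact absurd rfl h75
    | exact absurd rfl h76
    | exact ⟨rfl, rfl, rfl⟩
    | exact absurd ((Int.exists_mul_self _).mp ⟨d, (sq d).symm.trans hd⟩) (by decide +kernel)

theorem stmt_8_general (j5 j6 j7 s t : ℤ)
    (h5 : j5 ∈ ({-3, 10, -6} : Set ℤ)) (h6 : j6 ∈ ({-3, 10, -6} : Set ℤ))
    (h7 : j7 ∈ ({-3, 10, -6} : Set ℤ))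
    (hs : s ∉ ({-3, 10, -6} : Set ℤ))
    (e1 : 2 * j5 + j6 = j7 + s + t)
    (e2 : 2 * j5 ^ 2 + j6 ^ 2 = j7 ^ 2 + s ^ 2 + t ^ 2) :
    (j5 = -3 ∧ j6 = 10 ∧ j7 = -6) ∧ ({s, t} : Set ℤ) = {1, 9} := by
  simp only [Set.mem_insert_iff, Set.mem_singleton_iff] at h5 h6 h7 hs
  have h75 : j7 ≠ j5 := by
    rintro rfl
    rcases eq_or_eq_of_add_eq_of_sq_add_sq_eq (s := s) (t := t) (a := j7) (b := j6)
      (by linarith) (by linarith)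
      with rfl | rfl <;> tauto
  have h76 : j7 ≠ j6 := by
    rintro rfl
    rcases eq_or_eq_of_add_eq_of_sq_add_sq_eq (s := s) (t := t) (a := j5) (b := j5)
      (by linarith) (by linarith)
      with rfl | rfl <;> tauto
  have hd : (s - t) ^ 2 = 2 * (2 * j5 ^ 2 + j6 ^ 2 - j7 ^ 2) - (2 * j5 + j6 - j7) ^ 2 := by
    linear_combination (-2 : ℤ) * e2 + (2 * j5 + j6 - j7 + s + t) * e1
  obtain ⟨rfl, rfl, rfl⟩ := excited_triple_eq_of_sq_eq h5 h6 h7 h75 h76 hd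
  have hdiff : s - t = 8 ∨ s - t = -8 := sq_eq_sq_iff_eq_or_eq_neg.mp (by linarith)
  refine ⟨⟨rfl, rfl, rfl⟩, ?_⟩
  rcases hdiff with h | h
  · rw [show s = 9 by omega, show t = 1 by omega, Set.pair_comm]
  · rw [show s = 1 by omega, show t = 9 by omega]

theorem stmt_8 (j5 j6 j7 s t : ℤ)
    (h5 : j5 ∈ ({-3, 10, -6} : Set ℤ)) (h6 : j6 ∈ ({-3, 10, -6} : Set ℤ))
    (h7 : j7 ∈ ({-3, 10, -6} : Set ℤ))
    (hst : s ≠ t)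
    (hs : s ∉ ({-3, 10, -6} : Set ℤ)) (ht : t ∉ ({-3, 10, -6} : Set ℤ))
    (e1 : 2 * j5 + j6 = j7 + s + t)
    (e2 : 2 * j5 ^ 2 + j6 ^ 2 = j7 ^ 2 + s ^ 2 + t ^ 2) :
    (j5 = -3 ∧ j6 = 10 ∧ j7 = -6) ∧ ({s, t} : Set ℤ) = {1, 9} :=
  stmt_8_general j5 j6 j7 s t h5 h6 h7 hs e1 e2
end

section
/- For all real numbers ρ₁, ρ₂ ∈ [1, 2] and every integer k₁ with k₁ ≠ 0 and k₁ ≠ −1, one has 2(ρ₁ + ρ₂)k₁² + (5ρ₁ − ρ₂)k₁ − 3ρ₂ ≥ (2/3)√(k₁² + (k₁ + 1)²). -/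
/-!
Write `D ρ₁ ρ₂ x = 2(ρ₁ + ρ₂)x² + (5ρ₁ − ρ₂)x − 3ρ₂`. The substitution `x ↦ −1 − x`
(the other admissible mode vector `(k₂, k₁)`) together with `ρ₁ ↔ ρ₂` leaves both `D` and
`x² + (x + 1)²` unchanged, so it suffices to treat `x ≥ 1`. There
`√(x² + (x + 1)²) ≤ 2x + 1`, and `D` is affine in each `ρᵢ`, so checking the corners of
`[1, 2]²` leaves two quadratics in `x` that are positive for `x ≥ 1`.
-/

open Set

def divisorDeriv (ρ1 ρ2 x : ℝ) : ℝ :=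
  2 * (ρ1 + ρ2) * x ^ 2 + (5 * ρ1 - ρ2) * x - 3 * ρ2

lemma divisorDeriv_swap (ρ1 ρ2 x : ℝ) : divisorDeriv ρ2 ρ1 (-1 - x) = divisorDeriv ρ1 ρ2 x := by
  unfold divisorDeriv
  ring

lemma sqrt_sq_add_sq_le_add {a b : ℝ} (ha : 0 ≤ a) (hb : 0 ≤ b) :
    Real.sqrt (a ^ 2 + b ^ 2) ≤ a + b :=
  Real.sqrt_le_iff.2 ⟨by positivity, by nlinarith [mul_nonneg ha hb]⟩

lemma divisorDeriv_ge_of_one_le {ρ1 ρ2 x : ℝ} (hρ1 : ρ1 ∈ Icc (1 : ℝ) 2)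
    (hρ2 : ρ2 ∈ Icc (1 : ℝ) 2) (hx : 1 ≤ x) :
    (2 / 3) * Real.sqrt (x ^ 2 + (x + 1) ^ 2) ≤ divisorDeriv ρ1 ρ2 x := by
  obtain ⟨hρ1_ge, -⟩ := hρ1
  obtain ⟨hρ2_ge, hρ2_le⟩ := hρ2
  have hsqrt : Real.sqrt (x ^ 2 + (x + 1) ^ 2) ≤ 2 * x + 1 := by
    linarith [sqrt_sq_add_sq_le_add (by linarith : 0 ≤ x) (by linarith : 0 ≤ x + 1)]
  -- `3 (D − (2/3)(2x + 1))` at the corners `ρ₁ = 1`, `ρ₂ = 1` and `ρ₁ = 1`, `ρ₂ = 2`.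
  have h_at_one : 0 ≤ 12 * x ^ 2 + 8 * x - 11 := by nlinarith
  have h_at_two : 0 ≤ 18 * x ^ 2 + 5 * x - 20 := by nlinarith
  unfold divisorDeriv
  nlinarith [mul_nonneg (sub_nonneg.2 hρ1_ge) (by positivity : 0 ≤ x * (2 * x + 5)),
    mul_nonneg (sub_nonneg.2 hρ2_le) h_at_one, mul_nonneg (sub_nonneg.2 hρ2_ge) h_at_two]

theorem stmt_14 (ρ1 ρ2 : ℝ) (hρ1 : ρ1 ∈ Set.Icc (1 : ℝ) 2) (hρ2 : ρ2 ∈ Set.Icc (1 : ℝ) 2)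
    (k1 : ℤ) (hk0 : k1 ≠ 0) (hk1 : k1 ≠ -1) :
    2 * (ρ1 + ρ2) * (k1 : ℝ) ^ 2 + (5 * ρ1 - ρ2) * (k1 : ℝ) - 3 * ρ2 ≥
      (2 / 3) * Real.sqrt ((k1 : ℝ) ^ 2 + ((k1 : ℝ) + 1) ^ 2) := by
  rcases (by omega : 1 ≤ k1 ∨ k1 ≤ -2) with hpos | hneg
  · exact divisorDeriv_ge_of_one_le hρ1 hρ2 (by exact_mod_cast hpos)
  · have hx : (k1 : ℝ) ≤ -2 := by exact_mod_cast hneg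
    have h := divisorDeriv_ge_of_one_le hρ2 hρ1 (x := -1 - k1) (by linarith)
    have h_norm : (-1 - k1 : ℝ) ^ 2 + (-1 - k1 + 1) ^ 2 = (k1 : ℝ) ^ 2 + (k1 + 1) ^ 2 := by ring
    rwa [divisorDeriv_swap, h_norm] at h
end

section
/- Let ε = 10⁻² and ρ = (ρ₁, ρ₂, ρ₃) ∈ [2−ε, 2+ε] × [1−ε, 1+ε] × [9−ε, 9+ε]. For every (k₁, k₂, k₃) ∈ ℤ³ ∖ {0}, writing σ = k₁ + k₂ + k₃, one has 6[ρ₁(3k₂² + 3k₃² + k₁k₂ + k₁k₃ + 6σ²) + ρ₂(3k₁² + 3k₃² + k₁k₂ + k₂k₃ + 6σ²) + ρ₃(3k₁² + 3k₂² + k₁k₃ + k₂k₃ + 6σ²)] ≥ √((k₂+k₃)² + (k₁+k₃)² + (k₁+k₂)²). -/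
/-!
Each of the three quadratic forms multiplying `ρᵢ` is positive semidefinite, so the left-hand
side only decreases when every `ρᵢ` is replaced by the lower end `ρᵢ⁰ - ε` of its interval.
At that corner the inequality `|k'|² ≤ 6 ∑ (ρᵢ⁰ - ε) Qᵢ(k)` between quadratic forms holds on all
of `ℝ³`. Finally, for `k ∈ ℤ³ ∖ {0}` the integer `|k'|²` is at least `1` (the map `k ↦ k'` is
injective), so `|k'| ≤ |k'|²`.
-/

namespace QuinticNLS

/-- The form multiplying `ρ₁`; those multiplying `ρ₂` and `ρ₃` are `tangentialForm b a c` and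
`tangentialForm c a b`. -/
def tangentialForm (a b c : ℝ) : ℝ :=
  3 * b ^ 2 + 3 * c ^ 2 + a * b + a * c + 6 * (a + b + c) ^ 2

/-- `|k'|²` for `k' = (k₂ + k₃, k₁ + k₃, k₁ + k₂)`. -/
def pairSumSq {R : Type*} [CommRing R] (a b c : R) : R :=
  (b + c) ^ 2 + (a + c) ^ 2 + (a + b) ^ 2

theorem tangentialForm_nonneg (a b c : ℝ) : 0 ≤ tangentialForm a b c := by
  unfold tangentialForm
  nlinarith [sq_nonneg (a + b + c), sq_nonneg (b - c), sq_nonneg (a + 2 * b + 2 * c)]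

theorem pairSumSq_le_tangentialForm_combination (a b c : ℝ) :
    pairSumSq a b c ≤ 6 * ((2 - 1/100) * tangentialForm a b c +
      (1 - 1/100) * tangentialForm b a c + (9 - 1/100) * tangentialForm c a b) := by
  unfold pairSumSq tangentialForm
  nlinarith [sq_nonneg (a + b + c), sq_nonneg (a - b), sq_nonneg (a - c), sq_nonneg (b - c)]

theorem pairSumSq_le_weighted_tangentialForm {ρ1 ρ2 ρ3 : ℝ} (hρ1 : 2 - 1/100 ≤ ρ1) (hρ2 : 1 - 1/100 ≤ ρ2)
    (hρ3 : 9 - 1/100 ≤ ρ3) (a b c : ℝ) :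
    pairSumSq a b c ≤ 6 * (ρ1 * tangentialForm a b c + ρ2 * tangentialForm b a c +
      ρ3 * tangentialForm c a b) := by
  have h1 := mul_le_mul_of_nonneg_right hρ1 (tangentialForm_nonneg a b c)
  have h2 := mul_le_mul_of_nonneg_right hρ2 (tangentialForm_nonneg b a c)
  have h3 := mul_le_mul_of_nonneg_right hρ3 (tangentialForm_nonneg c a b)
  linarith [pairSumSq_le_tangentialForm_combination a b c]

theorem one_le_pairSumSq {a b c : ℤ} (h : (a, b, c) ≠ (0, 0, 0)) : 1 ≤ pairSumSq a b c := by
  unfold pairSumSq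
  by_contra! hlt
  have hbc : b + c = 0 := by nlinarith [sq_nonneg (b + c), sq_nonneg (a + c), sq_nonneg (a + b)]
  have hac : a + c = 0 := by nlinarith [sq_nonneg (b + c), sq_nonneg (a + c), sq_nonneg (a + b)]
  have hab : a + b = 0 := by nlinarith [sq_nonneg (b + c), sq_nonneg (a + c), sq_nonneg (a + b)]
  exact h (by simp only [Prod.mk.injEq]; omega)

end QuinticNLS

open QuinticNLS in
theorem stmt_15 (ρ1 ρ2 ρ3 : ℝ)
    (hρ1 : ρ1 ∈ Set.Icc (2 - 1/100 : ℝ) (2 + 1/100))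
    (hρ2 : ρ2 ∈ Set.Icc (1 - 1/100 : ℝ) (1 + 1/100))
    (hρ3 : ρ3 ∈ Set.Icc (9 - 1/100 : ℝ) (9 + 1/100))
    (k1 k2 k3 : ℤ) (hk : (k1, k2, k3) ≠ (0, 0, 0)) :
    6 * (ρ1 * (3 * (k2 : ℝ) ^ 2 + 3 * (k3 : ℝ) ^ 2 + (k1 : ℝ) * k2 + (k1 : ℝ) * k3 +
            6 * ((k1 : ℝ) + k2 + k3) ^ 2) +
         ρ2 * (3 * (k1 : ℝ) ^ 2 + 3 * (k3 : ℝ) ^ 2 + (k1 : ℝ) * k2 + (k2 : ℝ) * k3 +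
            6 * ((k1 : ℝ) + k2 + k3) ^ 2) +
         ρ3 * (3 * (k1 : ℝ) ^ 2 + 3 * (k2 : ℝ) ^ 2 + (k1 : ℝ) * k3 + (k2 : ℝ) * k3 +
            6 * ((k1 : ℝ) + k2 + k3) ^ 2)) ≥
      Real.sqrt (((k2 : ℝ) + k3) ^ 2 + ((k1 : ℝ) + k3) ^ 2 + ((k1 : ℝ) + k2) ^ 2) := by
  have hS : (1 : ℝ) ≤ pairSumSq (k1 : ℝ) k2 k3 := by
    have hZ := one_le_pairSumSq hk
    unfold pairSumSq at hZ ⊢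
    exact_mod_cast hZ
  have hbox := pairSumSq_le_weighted_tangentialForm hρ1.1 hρ2.1 hρ3.1 (k1 : ℝ) k2 k3
  have hsqrt := Real.sqrt_le_self_iff.mpr (Or.inr hS)
  unfold tangentialForm at hbox
  unfold pairSumSq at hsqrt hbox
  linarith
end

section
/- Let ε = 10⁻². For every ρ = (ρ₁, ρ₂, ρ₃) ∈ [2−ε, 2+ε] × [1−ε, 1+ε] × [9−ε, 9+ε] one has [3(2ρ₁² + ρ₂² − ρ₃² + 9ρ₁ρ₂ + 3ρ₁ρ₃)]² + 1 < 324·ρ₁²ρ₂ρ₃. -/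
/-!
At the centre `ρ = (2, 1, 9)` of the box the quadratic form
`2ρ₁² + ρ₂² − ρ₃² + 9ρ₁ρ₂ + 3ρ₁ρ₃` vanishes and its gradient is `(44, 20, −12)`, so on the box the
form stays in `[−1, 1]` and the left-hand side is at most `3² + 1 = 10`. The right-hand side is
increasing in each `ρᵢ > 0`, so it is at least its value `≈ 11400` at the lower corner of the box.
-/

lemma abs_mul_le_sq {α : Type*} [Ring α] [LinearOrder α] [IsStrictOrderedRing α] {x y δ : α}
    (hx : |x| ≤ δ) (hy : |y| ≤ δ) : |x * y| ≤ δ ^ 2 := by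
  rw [abs_mul, sq]
  exact mul_le_mul hx hy (abs_nonneg y) ((abs_nonneg x).trans hx)

/-- The form of `stmt_18` in the coordinates `(x, y, z) = (ρ₁ − 2, ρ₂ − 1, ρ₃ − 9)`. -/
lemma abs_form_le_one_of_abs_le {x y z : ℝ}
    (hx : |x| ≤ 1 / 100) (hy : |y| ≤ 1 / 100) (hz : |z| ≤ 1 / 100) :
    |44 * x + 20 * y - 12 * z + 2 * x ^ 2 + y ^ 2 - z ^ 2 + 9 * x * y + 3 * x * z| ≤ 1 := by
  have hxx := abs_le.1 (abs_mul_le_sq hx hx)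
  have hyy := abs_le.1 (abs_mul_le_sq hy hy)
  have hzz := abs_le.1 (abs_mul_le_sq hz hz)
  have hxy := abs_le.1 (abs_mul_le_sq hx hy)
  have hxz := abs_le.1 (abs_mul_le_sq hx hz)
  rw [abs_le] at *
  constructor <;> linarith

theorem stmt_18 (ρ1 ρ2 ρ3 : ℝ)
    (hρ1 : ρ1 ∈ Set.Icc (2 - 1/100 : ℝ) (2 + 1/100))
    (hρ2 : ρ2 ∈ Set.Icc (1 - 1/100 : ℝ) (1 + 1/100))
    (hρ3 : ρ3 ∈ Set.Icc (9 - 1/100 : ℝ) (9 + 1/100)) :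
    (3 * (2 * ρ1 ^ 2 + ρ2 ^ 2 - ρ3 ^ 2 + 9 * ρ1 * ρ2 + 3 * ρ1 * ρ3)) ^ 2 + 1 <
      324 * ρ1 ^ 2 * ρ2 * ρ3 := by
  set a := 2 * ρ1 ^ 2 + ρ2 ^ 2 - ρ3 ^ 2 + 9 * ρ1 * ρ2 + 3 * ρ1 * ρ3
  have near_center {ρ c : ℝ} (h : ρ ∈ Set.Icc (c - 1/100) (c + 1/100)) : |ρ - c| ≤ 1/100 := by
    rw [abs_sub_comm]
    exact Set.mem_Icc_iff_abs_le.2 h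
  have ha : |a| ≤ 1 := by
    convert abs_form_le_one_of_abs_le (near_center hρ1) (near_center hρ2) (near_center hρ3)
      using 2
    ring
  have hlhs : (3 * a) ^ 2 + 1 ≤ 10 := by
    nlinarith [(sq_le_one_iff_abs_le_one a).2 ha]
  have hrhs : 324 * (2 - 1/100) ^ 2 * (1 - 1/100) * (9 - 1/100) ≤ 324 * ρ1 ^ 2 * ρ2 * ρ3 := by
    obtain ⟨h1, -⟩ := hρ1
    obtain ⟨h2, -⟩ := hρ2
    obtain ⟨h3, -⟩ := hρ3
    have : 0 ≤ ρ2 := by linarith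
    gcongr
  norm_num at hrhs
  linarith
end
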